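/- Let L and L' be real normed spaces and let Q : L → L' be a continuous map satisfying Q(u+v) + Q(u-v) = 2Q(u) + 2Q(v) for all u, v ∈ L and Q(k•u) = k²•Q(u) for all u ∈ L and all k ∈ ℝ. Define B : L × L → L' by B(u,v) = (1/4)•(Q(u+v) − Q(u−v)). Then B is homogeneous in its first argument over the reals, i.e., B(k•u, v) = k•B(u,v) for all u, v ∈ L and all k ∈ ℝ. -/

import Mathlib

/-! The parallelogram law alone makes the polarization `B` additive in its first argument
(an identity among four instances of the law, using that `Q` is even). An additive map
`k ↦ B (k • u) v` that is continuous in `k` is `ℝ`-linear, since it is `ℚ`-linear and `ℚ` is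
dense in `ℝ`. -/

section Parallelogram

variable {E F : Type*} [AddCommGroup E] [AddCommGroup F] [Module ℝ F] {Q : E → F}

theorem map_zero_of_parallelogram
    (hQ : ∀ u v, Q (u + v) + Q (u - v) = (2 : ℝ) • Q u + (2 : ℝ) • Q v) : Q 0 = 0 := by
  have h := hQ 0 0
  simp only [add_zero, sub_zero] at h
  linear_combination (norm := module) (-1 / 2 : ℝ) • h

theorem map_neg_of_parallelogram
    (hQ : ∀ u v, Q (u + v) + Q (u - v) = (2 : ℝ) • Q u + (2 : ℝ) • Q v) (u : E) :
    Q (-u) = Q u := by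
  have h := hQ 0 u
  rw [zero_add, zero_sub, map_zero_of_parallelogram hQ, smul_zero, zero_add] at h
  linear_combination (norm := module) h

variable (Q) in
noncomputable def polarization (u v : E) : F := (1 / 4 : ℝ) • (Q (u + v) - Q (u - v))

theorem polarization_add_left
    (hQ : ∀ u v, Q (u + v) + Q (u - v) = (2 : ℝ) • Q u + (2 : ℝ) • Q v) (x y v : E) :
    polarization Q (x + y) v = polarization Q x v + polarization Q y v := by
  have e1 := hQ (x + v) y
  have e2 := hQ (x - v) y
  have e3 := hQ (y + v) x
  have e4 := hQ (y - v) x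
  rw [← map_neg_of_parallelogram hQ (y + v - x)] at e3
  rw [← map_neg_of_parallelogram hQ (y - v - x)] at e4
  unfold polarization
  abel_nf at e1 e2 e3 e4 ⊢
  linear_combination (norm := module)
    (1 / 8 : ℝ) • e1 - (1 / 8 : ℝ) • e2 + (1 / 8 : ℝ) • e3 - (1 / 8 : ℝ) • e4

end Parallelogram

section Continuous

variable {E F : Type*} [AddCommGroup E] [Module ℝ E] [TopologicalSpace E]
  [IsTopologicalAddGroup E] [ContinuousSMul ℝ E]
  [AddCommGroup F] [Module ℝ F] [TopologicalSpace F] [IsTopologicalAddGroup F]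
  [ContinuousSMul ℝ F] [T2Space F] {Q : E → F}

theorem polarization_smul_left (hQc : Continuous Q)
    (hQ : ∀ u v, Q (u + v) + Q (u - v) = (2 : ℝ) • Q u + (2 : ℝ) • Q v) (k : ℝ) (u v : E) :
    polarization Q (k • u) v = k • polarization Q u v := by
  let f : ℝ →+ F := AddMonoidHom.mk' (fun k => polarization Q (k • u) v) fun a b => by
    simp only [add_smul, polarization_add_left hQ]
  have hf : Continuous f := by
    change Continuous fun k : ℝ => (1 / 4 : ℝ) • (Q (k • u + v) - Q (k • u - v))
    fun_prop
  simpa [f] using map_real_smul f hf k 1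

end Continuous

theorem polarization_real_homogeneous_first_argument_general
    {L L' : Type*} [NormedAddCommGroup L] [NormedSpace ℝ L]
    [NormedAddCommGroup L'] [NormedSpace ℝ L']
    (Q : L → L') (hQcont : Continuous Q)
    (hQpar : ∀ u v : L, Q (u + v) + Q (u - v) = (2 : ℝ) • Q u + (2 : ℝ) • Q v)
    (B : L → L → L')
    (hB : ∀ u v : L, B u v = (1 / 4 : ℝ) • (Q (u + v) - Q (u - v))) :
    ∀ (k : ℝ) (u v : L), B (k • u) v = k • B u v := by
  obtain rfl : B = polarization Q := funext₂ hB
  exact polarization_smul_left hQcont hQpar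

/-- The polarization of a continuous quadratic operator is
homogeneous over the reals in its first argument. -/
theorem polarization_real_homogeneous_first_argument
    {L L' : Type*} [NormedAddCommGroup L] [NormedSpace ℝ L]
    [NormedAddCommGroup L'] [NormedSpace ℝ L']
    (Q : L → L') (hQcont : Continuous Q)
    (hQpar : ∀ u v : L, Q (u + v) + Q (u - v) = (2 : ℝ) • Q u + (2 : ℝ) • Q v)
    (hQhom : ∀ (k : ℝ) (u : L), Q (k • u) = k ^ 2 • Q u)
    (B : L → L → L')
    (hB : ∀ u v : L, B u v = (1 / 4 : ℝ) • (Q (u + v) - Q (u - v))) :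
    ∀ (k : ℝ) (u v : L), B (k • u) v = k • B u v :=
  polarization_real_homogeneous_first_argument_general Q hQcont hQpar B hB
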